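/- arXiv:1205.0824 — 3 statements merged into one kernel-verified Lean document; each statement's English description precedes it below -/
import Mathlib

section
/- Consistency of the localized Whittle matrix average at the true parameter: Suppose the spectral density matrix f of the process satisfies Assumption A1 with parameters d₀ and G₀, the bandwidth m = m(n) satisfies Assumption A4, and f_n is an n^β-consistent estimator of f for some β ∈ (0,1), i.e. n^β · max_{1≤j≤m(n)} ‖f_n(λ_j) − f(λ_j)‖ → 0 in probability as n → ∞. If d₀ ∈ Ω_β = [−β/2,0)^q ∩ (−1/2,0)^q ∩ B for a closed set B ⊆ ℝ^q on which the consistency holds, then Ĝ(d₀) → G₀ in probability, i.e. for every ε > 0, P(max_{r,s} |Ĝ(d₀)_{rs} − G₀^{rs}| > ε) → 0 as n → ∞. -/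
open MeasureTheory ProbabilityTheory Filter Finset Matrix
open scoped Topology Real NNReal ENNReal BigOperators MeasureTheory

noncomputable section

/-- The Fourier frequency `λⱼ = 2πj/n`. -/
def ffreq (n j : ℕ) : ℝ := 2 * Real.pi * j / n

/-- `Λⱼ(d)⁻¹ = diag(λⱼ^{dₖ} e^{i(λⱼ−π)dₖ/2})`, the inverse of the local
normalization matrix `Λⱼ(d) = diag(λⱼ^{−dₖ} e^{i(π−λⱼ)dₖ/2})`. -/
def LamInv (q : ℕ) (lam : ℝ) (d : Fin q → ℝ) : Matrix (Fin q) (Fin q) ℂ :=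
  Matrix.diagonal fun k =>
    ((lam ^ d k : ℝ) : ℂ) * Complex.exp (Complex.I * ((lam : ℂ) - (Real.pi : ℂ)) * (d k : ℂ) / 2)

/-- The localized Whittle average
`Ĝ(d) = (1/m) ∑_{j=1}^m Re[Λⱼ(d)⁻¹ fₙ(λⱼ) (Λⱼ(d)⁻¹)^*]` built from a spectral
density estimate `fn`. -/
def Ghat (q n m : ℕ) (fn : ℝ → Matrix (Fin q) (Fin q) ℂ) (d : Fin q → ℝ) :
    Matrix (Fin q) (Fin q) ℝ :=
  (m : ℝ)⁻¹ • ∑ j ∈ Finset.Icc 1 m,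
    (LamInv q (ffreq n j) d * fn (ffreq n j) * (LamInv q (ffreq n j) d)ᴴ).map Complex.re

/-- The objective function
`S(d) = log det Ĝ(d) − 2 ∑_k d_k (1/m) ∑_{j=1}^m log λⱼ`. -/
def Sobj (q n m : ℕ) (fn : ℝ → Matrix (Fin q) (Fin q) ℂ) (d : Fin q → ℝ) : ℝ :=
  Real.log (Ghat q n m fn d).det
    - 2 * ∑ k, d k * ((m : ℝ)⁻¹ * ∑ j ∈ Finset.Icc 1 m, Real.log (ffreq n j))

/-- The transfer function `A(λ) = ∑_{k=0}^∞ A_k e^{ikλ}` of the moving-average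
representation. -/
def transferFn (q : ℕ) (A : ℕ → Matrix (Fin q) (Fin q) ℝ) (lam : ℝ) :
    Matrix (Fin q) (Fin q) ℂ :=
  ∑' k : ℕ, Complex.exp (Complex.I * (k : ℂ) * (lam : ℂ)) • (A k).map (fun x => (x : ℂ))

/-- Discrete Fourier transform `w_ε(λ) = (2πn)^{−1/2} ∑_{t=1}^n ε_t e^{itλ}` of the
innovations. -/
def weps {Ω : Type*} (q n : ℕ) (ε : ℤ → Ω → Fin q → ℝ) (lam : ℝ) (ω : Ω) :
    Fin q → ℂ :=
  fun k => ((Real.sqrt (2 * Real.pi * n))⁻¹ : ℝ) *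
    ∑ t ∈ Finset.Icc 1 n, ((ε (t : ℤ) ω k : ℝ) : ℂ) * Complex.exp (Complex.I * (t : ℂ) * (lam : ℂ))

/-- The periodogram `I_ε(λ) = w_ε(λ) w_ε(λ)^*` of the innovations. -/
def Ieps {Ω : Type*} (q n : ℕ) (ε : ℤ → Ω → Fin q → ℝ) (lam : ℝ) (ω : Ω) :
    Matrix (Fin q) (Fin q) ℂ :=
  Matrix.of fun r s => weps q n ε lam ω r * star (weps q n ε lam ω s)

/-- The filtration `𝔉_t = σ(ε_s : s ≤ t)` generated by the innovations. -/
def filtrationOf {Ω : Type*} {q : ℕ} (ε : ℤ → Ω → Fin q → ℝ) (t : ℤ) :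
    MeasurableSpace Ω :=
  ⨆ s ∈ Set.Iic t, MeasurableSpace.comap (ε s) inferInstance

lemma LamInv_apply (q : ℕ) (lam : ℝ) (d : Fin q → ℝ) (M : Matrix (Fin q) (Fin q) ℂ) (r s : Fin q) :
    (LamInv q lam d * M * (LamInv q lam d)ᴴ) r s =
      (((lam ^ d r : ℝ) : ℂ) * Complex.exp (Complex.I * ((lam:ℂ) - (Real.pi:ℂ)) * (d r : ℂ) / 2)) * M r s *
      star (((lam ^ d s : ℝ) : ℂ) * Complex.exp (Complex.I * ((lam:ℂ) - (Real.pi:ℂ)) * (d s : ℂ) / 2)) := by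
  simp [LamInv, Matrix.diagonal_conjTranspose, Matrix.diagonal_mul, Matrix.mul_diagonal]

lemma star_fac (lam x : ℝ) :
    star (((lam ^ x : ℝ):ℂ) * Complex.exp (Complex.I * ((lam:ℂ)-(Real.pi:ℂ)) * (x:ℂ)/2)) =
      ((lam ^ x:ℝ):ℂ) * Complex.exp (-(Complex.I * ((lam:ℂ)-(Real.pi:ℂ)) * (x:ℂ)/2)) := by
  have h : (starRingEnd ℂ) (Complex.I * ((lam:ℂ)-(Real.pi:ℂ)) * (x:ℂ)/2) = -(Complex.I * ((lam:ℂ)-(Real.pi:ℂ)) * (x:ℂ)/2) := by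
    simp only [map_div₀, _root_.map_mul, map_sub, Complex.conj_I, Complex.conj_ofReal, map_ofNat]
    ring
  rw [star_mul', show (star (((lam ^ x : ℝ):ℂ)) : ℂ) = ((lam ^ x : ℝ):ℂ) from Complex.conj_ofReal _,
    show (star (Complex.exp (Complex.I * ((lam:ℂ)-(Real.pi:ℂ)) * (x:ℂ)/2)) : ℂ)
      = Complex.exp ((starRingEnd ℂ) (Complex.I * ((lam:ℂ)-(Real.pi:ℂ)) * (x:ℂ)/2)) from (Complex.exp_conj _).symm, h]

lemma entry_eq_of_pos (q : ℕ) (d : Fin q → ℝ) (M : Matrix (Fin q) (Fin q) ℂ) (r s : Fin q)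
    {lam : ℝ} (hlam : 0 < lam) :
    (LamInv q lam d * M * (LamInv q lam d)ᴴ) r s =
      (M r s * ((lam ^ (d r + d s) : ℝ) : ℂ)) *
        Complex.exp (Complex.I * ((lam:ℂ) - (Real.pi:ℂ)) * ((d r : ℂ) - (d s : ℂ)) / 2) := by
  rw [LamInv_apply, star_fac, Real.rpow_add hlam, Complex.ofReal_mul,
    show Complex.I * ((lam:ℂ) - (Real.pi:ℂ)) * ((d r : ℂ) - (d s : ℂ)) / 2
      = (Complex.I * ((lam:ℂ) - (Real.pi:ℂ)) * (d r : ℂ) / 2)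
        + (-(Complex.I * ((lam:ℂ) - (Real.pi:ℂ)) * (d s : ℂ) / 2)) by ring,
    Complex.exp_add]
  ring

lemma det_limit (q : ℕ) (f : ℝ → Matrix (Fin q) (Fin q) ℂ) (d₀ : Fin q → ℝ)
    (G₀ : Matrix (Fin q) (Fin q) ℝ)
    (hA1 : ∀ r s, Tendsto (fun lam : ℝ => f lam r s * ((lam ^ (d₀ r + d₀ s) : ℝ) : ℂ))
      (𝓝[>] (0 : ℝ))
      (𝓝 (Complex.exp (Complex.I * (Real.pi : ℂ) * ((d₀ r : ℂ) - (d₀ s : ℂ)) / 2) * (G₀ r s : ℂ))))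
    (r s : Fin q) :
    Tendsto (fun lam => ((LamInv q lam d₀ * f lam * (LamInv q lam d₀)ᴴ).map Complex.re) r s)
      (𝓝[>] (0:ℝ)) (𝓝 (G₀ r s)) := by
  have hexp : Tendsto (fun lam : ℝ =>
      Complex.exp (Complex.I * ((lam:ℂ) - (Real.pi:ℂ)) * ((d₀ r : ℂ) - (d₀ s : ℂ)) / 2))
      (𝓝[>] (0:ℝ))
      (𝓝 (Complex.exp (Complex.I * ((0:ℂ) - (Real.pi:ℂ)) * ((d₀ r : ℂ) - (d₀ s : ℂ)) / 2))) := by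
    have hc : Continuous (fun lam : ℝ =>
        Complex.exp (Complex.I * ((lam:ℂ) - (Real.pi:ℂ)) * ((d₀ r : ℂ) - (d₀ s : ℂ)) / 2)) := by
      continuity
    simpa using (hc.tendsto 0).mono_left nhdsWithin_le_nhds
  have hprod := (hA1 r s).mul hexp
  have hval : Complex.exp (Complex.I * (Real.pi : ℂ) * ((d₀ r : ℂ) - (d₀ s : ℂ)) / 2) * (G₀ r s : ℂ) *
      Complex.exp (Complex.I * ((0:ℂ) - (Real.pi:ℂ)) * ((d₀ r : ℂ) - (d₀ s : ℂ)) / 2)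
      = ((G₀ r s : ℝ) : ℂ) := by
    rw [mul_right_comm, ← Complex.exp_add,
      show Complex.I * (Real.pi : ℂ) * ((d₀ r : ℂ) - (d₀ s : ℂ)) / 2
        + Complex.I * ((0:ℂ) - (Real.pi:ℂ)) * ((d₀ r : ℂ) - (d₀ s : ℂ)) / 2 = 0 by ring,
      Complex.exp_zero, one_mul]
  rw [hval] at hprod
  have hre := (Complex.continuous_re.tendsto _).comp hprod
  simp only [Complex.ofReal_re] at hre
  refine Tendsto.congr' ?_ hre
  filter_upwards [self_mem_nhdsWithin] with lam hlam
  simp only [Function.comp_apply, Matrix.map_apply]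
  rw [entry_eq_of_pos q d₀ (f lam) r s hlam]

lemma abs_expfac (lam x : ℝ) :
    ‖Complex.exp (Complex.I * ((lam:ℂ)-(Real.pi:ℂ)) * (x:ℂ)/2)‖ = 1 := by
  rw [show Complex.I * ((lam:ℂ)-(Real.pi:ℂ)) * (x:ℂ)/2 = (((lam - Real.pi)*x/2 : ℝ):ℂ) * Complex.I by push_cast; ring,
    Complex.norm_exp_ofReal_mul_I]

lemma abs_expfac' (lam x y : ℝ) :
    ‖Complex.exp (Complex.I * ((lam:ℂ)-(Real.pi:ℂ)) * ((x:ℂ)-(y:ℂ))/2)‖ = 1 := by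
  rw [show ((x:ℂ)-(y:ℂ)) = ((x - y : ℝ):ℂ) by push_cast; ring, abs_expfac]

/-- **Consistency of the localized Whittle matrix average at the true parameter
(Lemma 3.1).**  Under Assumption A1 on the spectral density, Assumption A4 on the
bandwidth, and `n^β`-consistency of the spectral density estimator `fn`, if the true
parameter `d₀` lies in `Ω_β = [−β/2,0)^q ∩ (−1/2,0)^q ∩ B` then `Ĝ(d₀) → G₀` in
probability. -/
theorem Ghat_consistent_at_true_param
    {Ω : Type*} [MeasureSpace Ω] [IsProbabilityMeasure (ℙ : Measure Ω)]
    (q : ℕ) (hq : 1 ≤ q)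
    -- spectral density, true parameter and limiting matrix
    (f : ℝ → Matrix (Fin q) (Fin q) ℂ)
    (d₀ : Fin q → ℝ) (hd₀ : ∀ k, d₀ k ∈ Set.Ioo (-(1/2) : ℝ) (1/2))
    (G₀ : Matrix (Fin q) (Fin q) ℝ) (hG₀sym : G₀.IsSymm) (hG₀pd : G₀.PosDef)
    -- bandwidth and Assumption A4
    (m : ℕ → ℕ) (hA4₁ : Tendsto m atTop atTop)
    (hA4₂ : Tendsto (fun n : ℕ => (m n : ℝ) / n) atTop (𝓝 0))
    -- Assumption A1: f_{rs}(λ) = e^{iπ(d_r−d_s)/2} G₀^{rs} λ^{−d_r−d_s} + o(λ^{−d_r−d_s})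
    (hA1 : ∀ r s, Tendsto (fun lam : ℝ => f lam r s * ((lam ^ (d₀ r + d₀ s) : ℝ) : ℂ))
      (𝓝[>] (0 : ℝ))
      (𝓝 (Complex.exp (Complex.I * (Real.pi : ℂ) * ((d₀ r : ℂ) - (d₀ s : ℂ)) / 2) * (G₀ r s : ℂ))))
    -- the spectral density estimator and its n^β-consistency on the closed set B
    (β : ℝ) (hβ : β ∈ Set.Ioo (0 : ℝ) 1)
    (B : Set (Fin q → ℝ)) (hB : IsClosed B)
    (fn : ℕ → ℝ → Ω → Matrix (Fin q) (Fin q) ℂ)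
    (hmeas : ∀ n lam r s, Measurable fun ω => fn n lam ω r s)
    (hcons : ∀ δ > (0 : ℝ), Tendsto (fun n : ℕ =>
        ℙ {ω : Ω | ∃ j ∈ Finset.Icc 1 (m n), ∃ r s,
            δ ≤ (n : ℝ) ^ β * ‖fn n (ffreq n j) ω r s - f (ffreq n j) r s‖})
      atTop (𝓝 0))
    -- d₀ ∈ Ω_β = [−β/2,0)^q ∩ (−1/2,0)^q ∩ B
    (hΩ : (∀ k, -β / 2 ≤ d₀ k ∧ d₀ k < 0) ∧ d₀ ∈ B) :
    -- conclusion: Ĝ(d₀) → G₀ in probability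
    ∀ δ > (0 : ℝ), Tendsto (fun n : ℕ =>
        ℙ {ω : Ω | ∃ r s,
            δ ≤ |Ghat q n (m n) (fun lam => fn n lam ω) d₀ r s - G₀ r s|})
      atTop (𝓝 0) := by
  intro δ hδ
  obtain ⟨hβ0, hβ1⟩ := hβ
  have hEv : ∀ᶠ lam in 𝓝[>] (0:ℝ), ∀ r s : Fin q,
      |((LamInv q lam d₀ * f lam * (LamInv q lam d₀)ᴴ).map Complex.re) r s - G₀ r s| < δ/4 := by
    refine Filter.eventually_all.mpr fun r => Filter.eventually_all.mpr fun s => ?_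
    have := Metric.tendsto_nhds.mp (det_limit q f d₀ G₀ hA1 r s) (δ/4) (by positivity)
    simpa [Real.dist_eq] using this
  rw [Filter.eventually_iff, mem_nhdsGT_iff_exists_Ioo_subset] at hEv
  obtain ⟨u, hu, hsub⟩ := hEv
  have hu' : (0:ℝ) < u := hu
  set c := min u 1 with hc
  have hcpos : 0 < c := lt_min hu' one_pos
  have htail : ∀ᶠ n : ℕ in atTop, 1 ≤ m n ∧ 1 ≤ n ∧ (m n : ℝ)/n < c/(2*Real.pi) := by
    have h1 := hA4₁.eventually_ge_atTop 1
    have h2 := eventually_ge_atTop 1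
    have h3 := Metric.tendsto_nhds.mp hA4₂ (c/(2*Real.pi)) (by positivity)
    filter_upwards [h1, h2, h3] with n hn1 hn2 hn3
    refine ⟨hn1, hn2, ?_⟩
    rw [Real.dist_eq, sub_zero] at hn3
    exact lt_of_abs_lt hn3
  refine tendsto_of_tendsto_of_tendsto_of_le_of_le' tendsto_const_nhds (hcons (δ/4) (by positivity))
    (Eventually.of_forall fun n => zero_le) ?_
  filter_upwards [htail] with n hn
  obtain ⟨hm1, hn1, hmn⟩ := hn
  refine measure_mono ?_
  intro ω hω
  obtain ⟨r, s, hrs⟩ := hω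
  by_contra hnot
  simp only [Set.mem_setOf_eq, not_exists, not_and, not_le] at hnot
  have hnpos : (0:ℝ) < n := by exact_mod_cast hn1
  have hMpos : (0:ℝ) < (m n : ℝ) := by exact_mod_cast hm1
  -- per-term bound
  have key : ∀ j ∈ Finset.Icc 1 (m n),
      |((LamInv q (ffreq n j) d₀ * fn n (ffreq n j) ω * (LamInv q (ffreq n j) d₀)ᴴ).map Complex.re) r s
        - G₀ r s| ≤ δ/2 := by
    intro j hj
    obtain ⟨hjl, hjm⟩ := Finset.mem_Icc.mp hj
    set lam := ffreq n j with hlamdef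
    have hlam : 0 < lam := by
      have hj0 : (0:ℝ) < j := by exact_mod_cast hjl
      have : (0:ℝ) < 2 * Real.pi * j := by positivity
      exact div_pos this hnpos
    have hlamlt : lam < c := by
      have hstep : lam ≤ 2*Real.pi*(m n)/n := by
        have hjm' : (j:ℝ) ≤ (m n : ℝ) := by exact_mod_cast hjm
        rw [hlamdef]
        unfold ffreq
        gcongr
      have h2 : 2*Real.pi*(m n)/n < c := by
        have hπ : (0:ℝ) < 2*Real.pi := by positivity
        calc 2*Real.pi*(m n)/(n:ℝ) = 2*Real.pi * ((m n:ℝ)/n) := by ring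
        _ < 2*Real.pi * (c/(2*Real.pi)) := by exact mul_lt_mul_of_pos_left hmn hπ
        _ = c := by field_simp
      linarith
    have hlam1 : lam ≤ 1 := le_of_lt (lt_of_lt_of_le hlamlt (min_le_right u 1))
    have hlamu : lam < u := lt_of_lt_of_le hlamlt (min_le_left u 1)
    have key1 := hsub ⟨hlam, hlamu⟩ r s
    -- exponent bound
    have hdrs_lb : -β ≤ d₀ r + d₀ s := by
      have h1 := (hΩ.1 r).1; have h2 := (hΩ.1 s).1; linarith
    have hlam_inv : (n:ℝ)⁻¹ ≤ lam := by
      have hjr : (1:ℝ) ≤ (j:ℝ) := by exact_mod_cast hjl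
      have hπ := Real.pi_gt_three
      have h1 : (1:ℝ) ≤ 2*Real.pi*j := by nlinarith
      rw [hlamdef]
      unfold ffreq
      rw [inv_eq_one_div]
      exact (div_le_div_iff_of_pos_right hnpos).mpr h1
    have key2 : lam ^ (d₀ r + d₀ s) ≤ (n:ℝ) ^ β := by
      have e1 : lam ^ (d₀ r + d₀ s) ≤ lam ^ (-β) :=
        Real.rpow_le_rpow_of_exponent_ge hlam hlam1 hdrs_lb
      have e2 : lam ^ (-β) ≤ (n:ℝ) ^ β := by
        rw [Real.rpow_neg hlam.le]
        have h3 : ((n:ℝ)⁻¹) ^ β ≤ lam ^ β := Real.rpow_le_rpow (by positivity) hlam_inv hβ0.le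
        rw [Real.inv_rpow (by positivity)] at h3
        calc (lam ^ β)⁻¹ ≤ (((n:ℝ)^β)⁻¹)⁻¹ := inv_anti₀ (by positivity) h3
        _ = (n:ℝ)^β := inv_inv _
      linarith
    -- stochastic term
    have hψφ : ((LamInv q lam d₀ * fn n lam ω * (LamInv q lam d₀)ᴴ).map Complex.re) r s
        - ((LamInv q lam d₀ * f lam * (LamInv q lam d₀)ᴴ).map Complex.re) r s
        = ((fn n lam ω r s - f lam r s) * ((lam ^ (d₀ r + d₀ s) : ℝ) : ℂ)
            * Complex.exp (Complex.I * ((lam:ℂ)-(Real.pi:ℂ)) * ((d₀ r:ℂ)-(d₀ s:ℂ))/2)).re := by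
      simp only [Matrix.map_apply]
      rw [entry_eq_of_pos q d₀ _ r s hlam, entry_eq_of_pos q d₀ _ r s hlam, ← Complex.sub_re]
      congr 1
      ring
    have hstoch : |((LamInv q lam d₀ * fn n lam ω * (LamInv q lam d₀)ᴴ).map Complex.re) r s
        - ((LamInv q lam d₀ * f lam * (LamInv q lam d₀)ᴴ).map Complex.re) r s| ≤ δ/4 := by
      rw [hψφ]
      have h1 := Complex.abs_re_le_norm ((fn n lam ω r s - f lam r s) * ((lam ^ (d₀ r + d₀ s) : ℝ) : ℂ)
            * Complex.exp (Complex.I * ((lam:ℂ)-(Real.pi:ℂ)) * ((d₀ r:ℂ)-(d₀ s:ℂ))/2))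
      have h2 : ‖(fn n lam ω r s - f lam r s) * ((lam ^ (d₀ r + d₀ s) : ℝ) : ℂ)
            * Complex.exp (Complex.I * ((lam:ℂ)-(Real.pi:ℂ)) * ((d₀ r:ℂ)-(d₀ s:ℂ))/2)‖
          = ‖fn n lam ω r s - f lam r s‖ * lam ^ (d₀ r + d₀ s) := by
        rw [norm_mul, norm_mul, abs_expfac', mul_one, Complex.norm_real, Real.norm_eq_abs,
          abs_of_nonneg (Real.rpow_nonneg hlam.le _)]
      have h3 : ‖fn n lam ω r s - f lam r s‖ * lam ^ (d₀ r + d₀ s)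
          ≤ (n:ℝ)^β * ‖fn n lam ω r s - f lam r s‖ := by
        rw [mul_comm]
        exact mul_le_mul_of_nonneg_right key2 (norm_nonneg _)
      have h4 := hnot j hj r s
      calc |_| ≤ _ := h1
      _ = _ := h2
      _ ≤ _ := h3
      _ ≤ δ/4 := le_of_lt h4
    calc |((LamInv q lam d₀ * fn n lam ω * (LamInv q lam d₀)ᴴ).map Complex.re) r s - G₀ r s|
        = |(((LamInv q lam d₀ * f lam * (LamInv q lam d₀)ᴴ).map Complex.re) r s - G₀ r s)
          + (((LamInv q lam d₀ * fn n lam ω * (LamInv q lam d₀)ᴴ).map Complex.re) r s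
            - ((LamInv q lam d₀ * f lam * (LamInv q lam d₀)ᴴ).map Complex.re) r s)| := by ring_nf
    _ ≤ |((LamInv q lam d₀ * f lam * (LamInv q lam d₀)ᴴ).map Complex.re) r s - G₀ r s|
        + |((LamInv q lam d₀ * fn n lam ω * (LamInv q lam d₀)ᴴ).map Complex.re) r s
            - ((LamInv q lam d₀ * f lam * (LamInv q lam d₀)ᴴ).map Complex.re) r s| := abs_add_le _ _
    _ ≤ δ/4 + δ/4 := add_le_add (le_of_lt key1) hstoch
    _ = δ/2 := by ring
  -- assemble
  have hGhat : Ghat q n (m n) (fun lam => fn n lam ω) d₀ r s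
      = (m n:ℝ)⁻¹ * ∑ j ∈ Finset.Icc 1 (m n),
          ((LamInv q (ffreq n j) d₀ * fn n (ffreq n j) ω * (LamInv q (ffreq n j) d₀)ᴴ).map Complex.re) r s := by
    simp [Ghat, Matrix.sum_apply]
  have hcard : ((Finset.Icc 1 (m n)).card : ℝ) = (m n : ℝ) := by
    rw [Nat.card_Icc]
    simp
  have hfinal : |Ghat q n (m n) (fun lam => fn n lam ω) d₀ r s - G₀ r s| ≤ δ/2 := by
    rw [hGhat]
    have hsplit : (m n:ℝ)⁻¹ * ∑ j ∈ Finset.Icc 1 (m n),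
          ((LamInv q (ffreq n j) d₀ * fn n (ffreq n j) ω * (LamInv q (ffreq n j) d₀)ᴴ).map Complex.re) r s
          - G₀ r s
        = (m n:ℝ)⁻¹ * ∑ j ∈ Finset.Icc 1 (m n),
          (((LamInv q (ffreq n j) d₀ * fn n (ffreq n j) ω * (LamInv q (ffreq n j) d₀)ᴴ).map Complex.re) r s
            - G₀ r s) := by
      rw [Finset.sum_sub_distrib, Finset.sum_const, nsmul_eq_mul, hcard]
      field_simp
    rw [hsplit, abs_mul, abs_of_nonneg (inv_nonneg.mpr hMpos.le)]
    calc (m n:ℝ)⁻¹ * |∑ j ∈ Finset.Icc 1 (m n), _|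
        ≤ (m n:ℝ)⁻¹ * ∑ j ∈ Finset.Icc 1 (m n),
          |((LamInv q (ffreq n j) d₀ * fn n (ffreq n j) ω * (LamInv q (ffreq n j) d₀)ᴴ).map Complex.re) r s
            - G₀ r s| := by
          gcongr
          exact Finset.abs_sum_le_sum_abs _ _
    _ ≤ (m n:ℝ)⁻¹ * ((m n:ℝ) * (δ/2)) := by
          gcongr
          have := Finset.sum_le_card_nsmul (Finset.Icc 1 (m n)) _ (δ/2) key
          rw [nsmul_eq_mul, hcard] at this
          exact this
    _ = δ/2 := by field_simp
  linarith [hrs, hfinal]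
end
end

section
/- Partial-sum rate for the deviation from the innovation-periodogram approximation: Assume the process satisfies Assumptions B1–B5 and that the spectral density estimator f_n satisfies Condition (★). Then max_{1≤v≤m} max_{r,s∈{1,…,q}} |∑_{j=1}^v e^{i(λ_j−π)(d_r⁰−d_s⁰)/2} λ_j^{d_r⁰+d_s⁰} [f_n^{rs}(λ_j) − (A(λ_j))_{r·} I_ε(λ_j) (A(λ_j)^*)_{·s}]| = o_P(m^{1/2}/log(m)), i.e. this maximum multiplied by log(m)/m^{1/2} converges to 0 in probability as n → ∞. -/
open MeasureTheory ProbabilityTheory Filter Finset Matrix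
open scoped Topology Real NNReal ENNReal BigOperators MeasureTheory

noncomputable section

/-- The normalizing weight `e^{i(λⱼ−π)(d_r−d_s)/2} λⱼ^{d_r+d_s}`. -/
def weightCoef (q : ℕ) (d₀ : Fin q → ℝ) (n j : ℕ) (r s : Fin q) : ℂ :=
  Complex.exp (Complex.I * ((ffreq n j : ℂ) - (Real.pi : ℂ)) * ((d₀ r : ℂ) - (d₀ s : ℂ)) / 2)
    * ((ffreq n j ^ (d₀ r + d₀ s) : ℝ) : ℂ)

/-- The innovation-periodogram approximation `A(λ) I_ε(λ) A(λ)^*` of the spectral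
density. -/
def approxSpec {Ω : Type*} (q n : ℕ) (A : ℕ → Matrix (Fin q) (Fin q) ℝ)
    (ε : ℤ → Ω → Fin q → ℝ) (lam : ℝ) (ω : Ω) : Matrix (Fin q) (Fin q) ℂ :=
  transferFn q A lam * Ieps q n ε lam ω * (transferFn q A lam)ᴴ

/-! ### Auxiliary lemmas -/

lemma lem_norm_exp_I (c : ℝ) : ‖Complex.exp (Complex.I * (c : ℂ))‖ = 1 := by
  rw [Complex.norm_exp]
  simp

lemma lem_norm_expE (lam a b : ℝ) :
    ‖Complex.exp (Complex.I * ((lam : ℂ) - (Real.pi : ℂ)) * ((a : ℂ) - (b : ℂ)) / 2)‖ = 1 := by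
  have h : Complex.I * ((lam : ℂ) - (Real.pi : ℂ)) * ((a : ℂ) - (b : ℂ)) / 2
      = Complex.I * (((lam - Real.pi) * (a - b) / 2 : ℝ) : ℂ) := by
    push_cast; ring
  rw [h, lem_norm_exp_I]

lemma lem_abel_id (w a : ℕ → ℂ) : ∀ v : ℕ,
    ∑ j ∈ Finset.Icc 1 v, w j * a j
      = ∑ j ∈ Finset.Icc 1 (v-1), (w j - w (j+1)) * (∑ i ∈ Finset.Icc 1 j, a i)
        + w v * ∑ i ∈ Finset.Icc 1 v, a i := by
  intro v
  induction v with
  | zero => simp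
  | succ k ih =>
    rw [Finset.sum_Icc_succ_top (by omega : 1 ≤ k + 1) (fun j => w j * a j),
      Finset.sum_Icc_succ_top (by omega : 1 ≤ k + 1) a, ih]
    rcases Nat.eq_zero_or_pos k with hk | hk
    · subst hk; simp
    · have hk1 : k - 1 + 1 = k := by omega
      have h2 := Finset.sum_Icc_succ_top (by omega : 1 ≤ (k-1) + 1)
          (fun j => (w j - w (j+1)) * (∑ i ∈ Finset.Icc 1 j, a i))
      rw [hk1] at h2
      rw [show (k+1) - 1 = k from rfl, h2]
      ring

lemma lem_abel_bound (w a : ℕ → ℂ) (mm : ℕ) (B W V : ℝ)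
    (hS : ∀ j ∈ Finset.Icc 1 mm, ‖∑ i ∈ Finset.Icc 1 j, a i‖ ≤ B)
    (hW : ∀ j ∈ Finset.Icc 1 mm, ‖w j‖ ≤ W)
    (hV : ∑ j ∈ Finset.Icc 1 (mm - 1), ‖w (j+1) - w j‖ ≤ V)
    (v : ℕ) (hv : v ∈ Finset.Icc 1 mm) :
    ‖∑ j ∈ Finset.Icc 1 v, w j * a j‖ ≤ (W + V) * B := by
  simp only [Finset.mem_Icc] at hv
  have hB : 0 ≤ B := le_trans (norm_nonneg _) (hS v (by simp [Finset.mem_Icc]; omega))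
  rw [lem_abel_id w a v]
  have h1 : ‖∑ j ∈ Finset.Icc 1 (v-1), (w j - w (j+1)) * (∑ i ∈ Finset.Icc 1 j, a i)‖
      ≤ V * B := by
    calc ‖∑ j ∈ Finset.Icc 1 (v-1), (w j - w (j+1)) * (∑ i ∈ Finset.Icc 1 j, a i)‖
        ≤ ∑ j ∈ Finset.Icc 1 (v-1), ‖(w j - w (j+1)) * (∑ i ∈ Finset.Icc 1 j, a i)‖ :=
          norm_sum_le _ _
      _ ≤ ∑ j ∈ Finset.Icc 1 (v-1), ‖w (j+1) - w j‖ * B := by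
          refine Finset.sum_le_sum fun j hj => ?_
          simp only [Finset.mem_Icc] at hj
          rw [norm_mul, norm_sub_rev]
          exact mul_le_mul_of_nonneg_left
            (hS j (by simp [Finset.mem_Icc]; omega)) (norm_nonneg _)
      _ = (∑ j ∈ Finset.Icc 1 (v-1), ‖w (j+1) - w j‖) * B := by rw [Finset.sum_mul]
      _ ≤ (∑ j ∈ Finset.Icc 1 (mm-1), ‖w (j+1) - w j‖) * B := by
          refine mul_le_mul_of_nonneg_right ?_ hB
          exact Finset.sum_le_sum_of_subset_of_nonneg
            (Finset.Icc_subset_Icc_right (by omega)) (fun _ _ _ => norm_nonneg _)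
      _ ≤ V * B := mul_le_mul_of_nonneg_right hV hB
  have h2 : ‖w v * ∑ i ∈ Finset.Icc 1 v, a i‖ ≤ W * B := by
    rw [norm_mul]
    exact mul_le_mul (hW v (by simp [Finset.mem_Icc]; omega))
      (hS v (by simp [Finset.mem_Icc]; omega)) (norm_nonneg _)
      (le_trans (norm_nonneg _) (hW v (by simp [Finset.mem_Icc]; omega)))
  calc ‖_ + _‖ ≤ _ := norm_add_le _ _
    _ ≤ V * B + W * B := add_le_add h1 h2
    _ = (W + V) * B := by ring

lemma lem_tele_mono (x : ℕ → ℝ) (h : ∀ j, 1 ≤ j → x j ≤ x (j+1)) (k : ℕ) :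
    ∑ j ∈ Finset.Icc 1 k, |x (j+1) - x j| = x (k+1) - x 1 := by
  induction k with
  | zero => simp
  | succ l ih =>
    rw [Finset.sum_Icc_succ_top (by omega : 1 ≤ l + 1), ih,
      abs_of_nonneg (by linarith [h (l+1) (by omega)])]
    ring

lemma lem_tele_anti (x : ℕ → ℝ) (h : ∀ j, 1 ≤ j → x (j+1) ≤ x j) (k : ℕ) :
    ∑ j ∈ Finset.Icc 1 k, |x (j+1) - x j| = x 1 - x (k+1) := by
  induction k with
  | zero => simp
  | succ l ih =>
    rw [Finset.sum_Icc_succ_top (by omega : 1 ≤ l + 1), ih,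
      abs_of_nonpos (by linarith [h (l+1) (by omega)])]
    ring

lemma lem_ffreq_nonneg (n j : ℕ) : 0 ≤ ffreq n j := by
  unfold ffreq; positivity

lemma lem_ffreq_pos (n j : ℕ) (hn : 1 ≤ n) (hj : 1 ≤ j) : 0 < ffreq n j := by
  unfold ffreq
  have h1 : (0:ℝ) < j := by exact_mod_cast hj
  have h2 : (0:ℝ) < n := by exact_mod_cast hn
  positivity

lemma lem_ffreq_le (n j : ℕ) (hn : 1 ≤ n) (hjn : j ≤ n) : ffreq n j ≤ 2 * Real.pi := by
  unfold ffreq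
  have h2 : (0:ℝ) < n := by exact_mod_cast hn
  rw [div_le_iff₀ h2]
  have : (j:ℝ) ≤ n := by exact_mod_cast hjn
  nlinarith [Real.pi_pos]

lemma lem_ffreq_mono (n j : ℕ) : ffreq n j ≤ ffreq n (j+1) := by
  unfold ffreq
  rcases Nat.eq_zero_or_pos n with hn | hn
  · subst hn; simp
  · have h2 : (0:ℝ) < n := by exact_mod_cast hn
    push_cast
    gcongr
    linarith

lemma lem_ffreq_one_le (n j : ℕ) (hj : 1 ≤ j) : 2 * Real.pi / n ≤ ffreq n j := by
  unfold ffreq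
  rcases Nat.eq_zero_or_pos n with hn | hn
  · subst hn; simp
  · have h2 : (0:ℝ) < n := by exact_mod_cast hn
    have hj' : (1:ℝ) ≤ j := by exact_mod_cast hj
    rw [div_le_div_iff₀ h2 h2]
    nlinarith [Real.pi_pos, mul_le_mul_of_nonneg_right (mul_le_mul_of_nonneg_left hj' (by positivity : (0:ℝ) ≤ 2*Real.pi)) h2.le]

lemma lem_ffreq_rpow_le (n j : ℕ) (hn : 1 ≤ n) (hj : 1 ≤ j) (hjn : j ≤ n)
    (d : ℝ) (hd : |d| ≤ 1) :
    (ffreq n j) ^ d ≤ 40 * (n:ℝ) ^ |d| := by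
  have hLpos := lem_ffreq_pos n j hn hj
  have hLle := lem_ffreq_le n j hn hjn
  have hnpos : (0:ℝ) < n := by exact_mod_cast hn
  have hpi := Real.pi_gt_three
  have hpi' := Real.pi_lt_d2
  have h1 : ffreq n j ^ d = ffreq n j ^ (d + |d|) * ffreq n j ^ (-|d|) := by
    rw [← Real.rpow_add hLpos]; ring_nf
  rw [h1]
  have h2 : ffreq n j ^ (d + |d|) ≤ 40 := by
    calc ffreq n j ^ (d + |d|) ≤ (2 * Real.pi) ^ (d + |d|) := by
          apply Real.rpow_le_rpow hLpos.le hLle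
          have := neg_abs_le d; linarith
      _ ≤ (2 * Real.pi) ^ (2:ℝ) := by
          apply Real.rpow_le_rpow_of_exponent_le (by linarith)
          have := le_abs_self d; linarith
      _ = (2 * Real.pi) ^ (2:ℕ) := by
          rw [← Real.rpow_natCast]; norm_num
      _ ≤ 40 := by nlinarith
  have h3 : ffreq n j ^ (-|d|) ≤ (n:ℝ) ^ |d| := by
    calc ffreq n j ^ (-|d|) ≤ (2 * Real.pi / n) ^ (-|d|) := by
          apply Real.rpow_le_rpow_of_nonpos (by positivity) (lem_ffreq_one_le n j hj)
          simp [abs_nonneg]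
      _ = ((n:ℝ) / (2 * Real.pi)) ^ (|d|) := by
          rw [Real.rpow_neg (by positivity), ← Real.inv_rpow (by positivity), inv_div]
      _ ≤ (n:ℝ) ^ |d| := by
          apply Real.rpow_le_rpow (by positivity) ?_ (abs_nonneg d)
          rw [div_le_iff₀ (by linarith)]
          nlinarith
  calc ffreq n j ^ (d + |d|) * ffreq n j ^ (-|d|) ≤ 40 * ((n:ℝ) ^ |d|) := by
        apply mul_le_mul h2 h3 (Real.rpow_nonneg hLpos.le _) (by norm_num)
    _ = 40 * (n:ℝ) ^ |d| := rfl

lemma lem_norm_weightCoef (q : ℕ) (d₀ : Fin q → ℝ) (n j : ℕ) (r s : Fin q) :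
    ‖weightCoef q d₀ n j r s‖ = ffreq n j ^ (d₀ r + d₀ s) := by
  unfold weightCoef
  rw [norm_mul]
  rw [lem_norm_expE, one_mul, Complex.norm_real, Real.norm_eq_abs,
    abs_of_nonneg (Real.rpow_nonneg (lem_ffreq_nonneg n j) _)]

lemma lem_ffreq_step (n j : ℕ) : ffreq n (j+1) = ffreq n j + 2 * Real.pi / n := by
  unfold ffreq; push_cast; ring

lemma lem_weight_step (q : ℕ) (d₀ : Fin q → ℝ) (n j : ℕ) (r s : Fin q)
    (hn : 4 ≤ n) (hds : |d₀ r - d₀ s| ≤ 1) :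
    ‖weightCoef q d₀ n (j+1) r s - weightCoef q d₀ n j r s‖ ≤
      |ffreq n (j+1) ^ (d₀ r + d₀ s) - ffreq n j ^ (d₀ r + d₀ s)|
        + (2 * Real.pi / n) * ffreq n j ^ (d₀ r + d₀ s) := by
  have hnpos : (0:ℝ) < n := by exact_mod_cast (by omega : 0 < n)
  set c : ℝ := d₀ r - d₀ s with hc
  set x : ℕ → ℝ := fun i => ffreq n i ^ (d₀ r + d₀ s) with hx
  set E : ℕ → ℂ := fun i =>
    Complex.exp (Complex.I * ((ffreq n i : ℂ) - (Real.pi : ℂ)) * ((d₀ r : ℂ) - (d₀ s : ℂ)) / 2)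
    with hE
  have hwc : ∀ i, weightCoef q d₀ n i r s = E i * ((x i : ℝ) : ℂ) := fun i => rfl
  set Δ : ℝ := Real.pi * c / n with hΔ
  have hEstep : E (j+1) = E j * Complex.exp (Complex.I * (Δ : ℂ)) := by
    rw [hE]
    simp only
    rw [← Complex.exp_add]
    congr 1
    have : ((ffreq n (j+1) : ℝ) : ℂ) = ((ffreq n j : ℝ) : ℂ) + ((2 * Real.pi / n : ℝ) : ℂ) := by
      rw [← Complex.ofReal_add, lem_ffreq_step]
    rw [this, hΔ, hc]
    push_cast
    ring
  have hnormE : ∀ i, ‖E i‖ = 1 := by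
    intro i
    rw [hE]
    simp only
    rw [lem_norm_expE]
  have hdecomp : weightCoef q d₀ n (j+1) r s - weightCoef q d₀ n j r s
      = E (j+1) * (((x (j+1) : ℝ) : ℂ) - ((x j : ℝ) : ℂ)) + (E (j+1) - E j) * ((x j : ℝ) : ℂ) := by
    rw [hwc, hwc]; ring
  rw [hdecomp]
  have habsD : |Δ| ≤ Real.pi / n := by
    rw [hΔ, abs_div, abs_of_nonneg hnpos.le, div_le_div_iff₀ (by positivity) hnpos]
    rw [abs_mul, abs_of_nonneg Real.pi_pos.le]
    nlinarith [Real.pi_pos, mul_le_mul_of_nonneg_right (mul_le_mul_of_nonneg_left hds Real.pi_pos.le) hnpos.le]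
  have hpn : Real.pi / n ≤ 1 := by
    rw [div_le_one hnpos]
    have : (4:ℝ) ≤ n := by exact_mod_cast hn
    nlinarith [Real.pi_lt_d2]
  have hEdiff : ‖E (j+1) - E j‖ ≤ 2 * Real.pi / n := by
    have : E (j+1) - E j = E j * (Complex.exp (Complex.I * (Δ : ℂ)) - 1) := by
      rw [hEstep]; ring
    rw [this, norm_mul, hnormE, one_mul]
    have habsI : ‖Complex.I * (Δ:ℂ)‖ = |Δ| := by
      simp
    have h1 : ‖Complex.I * (Δ:ℂ)‖ ≤ 1 := by
      rw [habsI]; exact le_trans habsD hpn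
    calc ‖Complex.exp (Complex.I * (Δ:ℂ)) - 1‖
        = ‖Complex.exp (Complex.I * (Δ:ℂ)) - 1‖ := rfl
      _ ≤ 2 * ‖Complex.I * (Δ:ℂ)‖ := Complex.norm_exp_sub_one_le h1
      _ = 2 * |Δ| := by rw [habsI]
      _ ≤ 2 * (Real.pi / n) := by linarith
      _ = 2 * Real.pi / n := by ring
  calc ‖E (j+1) * (((x (j+1) : ℝ) : ℂ) - ((x j : ℝ) : ℂ)) + (E (j+1) - E j) * ((x j : ℝ) : ℂ)‖
      ≤ ‖E (j+1) * (((x (j+1) : ℝ) : ℂ) - ((x j : ℝ) : ℂ))‖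
        + ‖(E (j+1) - E j) * ((x j : ℝ) : ℂ)‖ := norm_add_le _ _
    _ ≤ |x (j+1) - x j| + (2 * Real.pi / n) * x j := by
        gcongr
        · rw [norm_mul, hnormE, one_mul, ← Complex.ofReal_sub, Complex.norm_real,
            Real.norm_eq_abs]
        · rw [norm_mul]
          have hxj : ‖((x j : ℝ) : ℂ)‖ = x j := by
            rw [Complex.norm_real, Real.norm_eq_abs,
              abs_of_nonneg (Real.rpow_nonneg (lem_ffreq_nonneg n j) _)]
          rw [hxj]
          exact mul_le_mul_of_nonneg_right hEdiff
            (Real.rpow_nonneg (lem_ffreq_nonneg n j) _)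

lemma lem_log_ge_one {M : ℝ} (hM : 3 ≤ M) : 1 ≤ Real.log M := by
  rw [Real.le_log_iff_exp_le (by linarith)]
  have := Real.exp_one_lt_d9
  linarith

lemma lem_log_sq_le {M : ℝ} (hM : 3 ≤ M) : Real.log M ^ 2 ≤ 4 * M := by
  have h0 : (0:ℝ) < M := by linarith
  have h1 : Real.log M = 2 * Real.log (Real.sqrt M) := by
    rw [Real.log_sqrt h0.le]; ring
  have h2 : Real.log (Real.sqrt M) ≤ Real.sqrt M :=
    le_trans (Real.log_le_sub_one_of_pos (Real.sqrt_pos.mpr h0)) (by linarith)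
  have h3 : 0 ≤ Real.log M := by nlinarith [lem_log_ge_one hM]
  have h4 : Real.log M ≤ 2 * Real.sqrt M := by rw [h1]; linarith
  nlinarith [Real.sq_sqrt h0.le, Real.sqrt_nonneg M]

lemma lem_rate (α : ℝ) (hα : α ∈ Set.Ioc (0:ℝ) 2) (m : ℕ → ℕ)
    (hB4₁ : Tendsto m atTop atTop)
    (hB4₂ : Tendsto (fun n : ℕ =>
        (m n : ℝ) ^ (1 + 2 * α) * (Real.log (m n)) ^ 2 / (n : ℝ) ^ (2 * α)) atTop (𝓝 0)) :
    Tendsto (fun n : ℕ => Real.sqrt (m n) * Real.log (m n) / n) atTop (𝓝 0) := by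
  obtain ⟨hα0, hα2⟩ := hα
  set u : ℕ → ℝ := fun n =>
    (m n : ℝ) ^ (1 + 2 * α) * (Real.log (m n)) ^ 2 / (n : ℝ) ^ (2 * α) with hu
  have hup : Tendsto (fun n => (u n) ^ (1/(2*α))) atTop (𝓝 0) := by
    have := hB4₂.rpow_const (p := 1/(2*α)) (Or.inr (by positivity))
    rwa [Real.zero_rpow (by positivity)] at this
  have hMtend : Tendsto (fun n => ((m n : ℝ))) atTop atTop :=
    tendsto_natCast_atTop_atTop.comp hB4₁
  have hMα : Tendsto (fun n => ((m n : ℝ)) ^ α) atTop atTop :=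
    (tendsto_rpow_atTop hα0).comp hMtend
  apply squeeze_zero' (g := fun n => (u n) ^ (1/(2*α))) ?_ ?_ hup
  · filter_upwards [hMtend.eventually_ge_atTop 3] with n hM
    positivity
  · filter_upwards [hMtend.eventually_ge_atTop 3, hMα.eventually_ge_atTop 4,
      eventually_ge_atTop 1] with n hM hMa hn1
    set M : ℝ := (m n : ℝ) with hMdef
    set L : ℝ := Real.log M with hL
    set N : ℝ := (n : ℝ) with hN
    have hM0 : (0:ℝ) < M := by linarith
    have hN1 : (1:ℝ) ≤ N := by rw [hN]; exact_mod_cast hn1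
    have hN0 : (0:ℝ) < N := by linarith
    have hL1 : 1 ≤ L := lem_log_ge_one hM
    have hL0 : (0:ℝ) < L := by linarith
    have hr0 : 0 ≤ Real.sqrt M * L / N := by positivity
    have hs : (Real.sqrt M) ^ (2*α) = M ^ α := by
      rw [Real.sqrt_eq_rpow, ← Real.rpow_mul hM0.le,
        show (1/(2:ℝ)) * (2*α) = α by ring]
    have e1 : (Real.sqrt M * L / N) ^ (2*α)
        = (M ^ α * L ^ (2*α)) / N ^ (2*α) := by
      rw [Real.div_rpow (by positivity) hN0.le,
        Real.mul_rpow (Real.sqrt_nonneg M) (by linarith), hs]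
    have hstep : L ^ (2*α - 2) ≤ M ^ (1+α) := by
      rcases le_or_gt α 1 with hα1 | hα1
      · calc L ^ (2*α-2) ≤ L ^ (0:ℝ) :=
              Real.rpow_le_rpow_of_exponent_le hL1 (by linarith)
          _ = 1 := Real.rpow_zero L
          _ = M ^ (0:ℝ) := (Real.rpow_zero M).symm
          _ ≤ M ^ (1+α) := Real.rpow_le_rpow_of_exponent_le (by linarith) (by linarith)
      · calc L ^ (2*α-2) ≤ L ^ (2:ℝ) :=
              Real.rpow_le_rpow_of_exponent_le hL1 (by linarith)
          _ = L^2 := Real.rpow_two L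
          _ ≤ 4*M := lem_log_sq_le hM
          _ ≤ M ^ (1+α) := by
              rw [Real.rpow_add hM0, Real.rpow_one]
              nlinarith
    have hL2a : L ^ (2*α) ≤ M ^ (1+α) * L^2 := by
      calc L ^ (2*α) = L ^ (2*α-2) * L ^ (2:ℝ) := by
            rw [← Real.rpow_add hL0]; ring_nf
        _ ≤ M ^ (1+α) * L ^ (2:ℝ) :=
            mul_le_mul_of_nonneg_right hstep (Real.rpow_nonneg hL0.le _)
        _ = M ^ (1+α) * L^2 := by rw [Real.rpow_two]
    have hnum : M ^ α * L ^ (2*α) ≤ M ^ (1+2*α) * L^2 := by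
      calc M ^ α * L ^ (2*α) ≤ M ^ α * (M ^ (1+α) * L^2) :=
            mul_le_mul_of_nonneg_left hL2a (Real.rpow_nonneg hM0.le _)
        _ = M ^ (1+2*α) * L^2 := by
            rw [← mul_assoc, ← Real.rpow_add hM0, show α + (1+α) = 1+2*α by ring]
    have hkey : (Real.sqrt M * L / N) ^ (2*α) ≤ u n := by
      rw [e1]
      calc (M ^ α * L ^ (2*α)) / N ^ (2*α)
          ≤ (M ^ (1+2*α) * L^2) / N ^ (2*α) :=
            (div_le_div_iff_of_pos_right (by positivity)).mpr hnum
        _ = u n := rfl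
    have hid : Real.sqrt M * L / N = ((Real.sqrt M * L / N) ^ (2*α)) ^ (1/(2*α)) := by
      rw [← Real.rpow_mul hr0, show (2*α) * (1/(2*α)) = 1 by field_simp, Real.rpow_one]
    rw [hid]
    exact Real.rpow_le_rpow (by positivity) hkey (by positivity)

lemma lem_m_le_n (α : ℝ) (hα : α ∈ Set.Ioc (0:ℝ) 2) (m : ℕ → ℕ)
    (hB4₁ : Tendsto m atTop atTop)
    (hB4₂ : Tendsto (fun n : ℕ =>
        (m n : ℝ) ^ (1 + 2 * α) * (Real.log (m n)) ^ 2 / (n : ℝ) ^ (2 * α)) atTop (𝓝 0)) :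
    ∀ᶠ n in atTop, m n ≤ n := by
  obtain ⟨hα0, hα2⟩ := hα
  have hMtend : Tendsto (fun n => ((m n : ℝ))) atTop atTop :=
    tendsto_natCast_atTop_atTop.comp hB4₁
  filter_upwards [hMtend.eventually_ge_atTop 3, eventually_ge_atTop 1,
    hB4₂.eventually_lt_const one_pos] with n hM hn1 hlt
  set M : ℝ := (m n : ℝ) with hMdef
  set L : ℝ := Real.log M with hL
  set N : ℝ := (n : ℝ) with hN
  have hM0 : (0:ℝ) < M := by linarith
  have hN1 : (1:ℝ) ≤ N := by rw [hN]; exact_mod_cast hn1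
  have hN0 : (0:ℝ) < N := by linarith
  have hL1 : 1 ≤ L := lem_log_ge_one hM
  have hNpow : (0:ℝ) < N ^ (2*α) := by positivity
  rw [div_lt_one hNpow] at hlt
  have h1 : M ^ (2*α) ≤ M ^ (1+2*α) :=
    Real.rpow_le_rpow_of_exponent_le (by linarith) (by linarith)
  have hL2 : (1:ℝ) ≤ L^2 := by nlinarith
  have h2 : M ^ (1+2*α) ≤ M ^ (1+2*α) * L^2 :=
    le_mul_of_one_le_right (Real.rpow_nonneg hM0.le _) hL2
  have h3 : M ^ (2*α) < N ^ (2*α) := by linarith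
  by_contra hcon
  push_neg at hcon
  have : N ≤ M := by rw [hN, hMdef]; exact_mod_cast hcon.le
  have := Real.rpow_le_rpow hN0.le this (by positivity : (0:ℝ) ≤ 2*α)
  linarith


/-- **Partial-sum rate for the deviation from the innovation-periodogram
approximation (Lemma 4.1(a)).**  Under Assumptions B1–B5 and Condition (★) on the
spectral density estimator `fn`,
`max_{1≤v≤m} max_{r,s} |∑_{j=1}^v e^{i(λⱼ−π)(d_r−d_s)/2} λⱼ^{d_r+d_s}
[f_n^{rs}(λⱼ) − (A(λⱼ))_{r·} I_ε(λⱼ) (A(λⱼ)^*)_{·s}]| = o_P(m^{1/2}/log m)`. -/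
theorem partial_sum_rate_innovation_approx
    {Ω : Type*} [MeasureSpace Ω] [IsProbabilityMeasure (ℙ : Measure Ω)]
    (q : ℕ) (hq : 1 ≤ q)
    (X : ℕ → Ω → Fin q → ℝ) (μ : Fin q → ℝ)
    (f : ℝ → Matrix (Fin q) (Fin q) ℂ)
    (d₀ : Fin q → ℝ) (hd₀ : ∀ k, d₀ k ∈ Set.Ioo (-(1/2) : ℝ) (1/2))
    (G₀ : Matrix (Fin q) (Fin q) ℝ) (hG₀sym : G₀.IsSymm) (hG₀pd : G₀.PosDef)
    -- Assumption B1
    (α : ℝ) (hα : α ∈ Set.Ioc (0 : ℝ) 2)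
    (hB1 : ∀ r s, (fun lam : ℝ => f lam r s
        - Complex.exp (Complex.I * ((Real.pi : ℂ) - (lam : ℂ)) * ((d₀ r : ℂ) - (d₀ s : ℂ)) / 2)
          * ((lam ^ (-d₀ r - d₀ s) : ℝ) : ℂ) * (G₀ r s : ℂ))
      =O[𝓝[>] (0 : ℝ)] fun lam : ℝ => (lam ^ (-d₀ r - d₀ s + α) : ℝ))
    -- Assumption B2: A2 together with finite fourth moments of the innovations
    (ε : ℤ → Ω → Fin q → ℝ) (A : ℕ → Matrix (Fin q) (Fin q) ℝ)
    (hεmeas : ∀ t, Measurable (ε t))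
    (hXrep : ∀ (t : ℕ) ω k, X t ω k - μ k = ∑' j : ℕ, ∑ l, A j k l * ε ((t : ℤ) - (j : ℤ)) ω l)
    (hAsq : ∀ r s, Summable fun k => (A k r s) ^ 2)
    (hmd : ∀ (t : ℤ) k, ℙ[fun ω => ε t ω k|filtrationOf ε (t - 1)] =ᵐ[ℙ] 0)
    (hcov : ∀ (t : ℤ) r s, ℙ[fun ω => ε t ω r * ε t ω s|filtrationOf ε (t - 1)]
      =ᵐ[ℙ] fun _ => if r = s then (1 : ℝ) else 0)
    (hdom : ∃ ξ : Ω → ℝ, ∃ K : ℝ, Integrable (fun ω => ξ ω ^ 2) ℙ ∧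
      ∀ (t : ℤ), ∀ η > (0 : ℝ),
        ℙ {ω : Ω | η < ‖ε t ω‖ ^ 2} ≤ ENNReal.ofReal K * ℙ {ω : Ω | η < ξ ω ^ 2})
    (hfourth : ∀ (t : ℤ) k, Integrable (fun ω => (ε t ω k) ^ 4) ℙ)
    -- Assumption B3
    (hB3 : ∃ δ > (0 : ℝ), ∃ C > (0 : ℝ), ∃ D : ℝ → Matrix (Fin q) (Fin q) ℂ,
      ∀ lam ∈ Set.Ioo (0 : ℝ) δ, ∀ r s,
        HasDerivAt (fun x : ℝ => (transferFn q A x)ᴴ r s) (D lam r s) lam ∧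
          ‖D lam r s‖ ≤ C * lam⁻¹ * ‖fun s' => (transferFn q A lam)ᴴ r s'‖)
    -- bandwidth and Assumption B4
    (m : ℕ → ℕ) (hB4₁ : Tendsto m atTop atTop)
    (hB4₂ : Tendsto (fun n : ℕ =>
        (m n : ℝ) ^ (1 + 2 * α) * (Real.log (m n)) ^ 2 / (n : ℝ) ^ (2 * α)) atTop (𝓝 0))
    (hB4₃ : ∀ δ > (0 : ℝ), Tendsto (fun n : ℕ => Real.log n / (m n : ℝ) ^ δ) atTop (𝓝 0))
    -- Assumption B5
    (hB5 : ∃ M : Matrix (Fin q) (Fin q) ℝ, ∀ r s,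
      Tendsto (fun lam : ℝ => (LamInv q lam d₀ * transferFn q A lam) r s)
        (𝓝[>] (0 : ℝ)) (𝓝 ((M r s : ℝ) : ℂ)))
    -- the spectral density estimator and Condition (★)
    (fn : ℕ → ℝ → Ω → Matrix (Fin q) (Fin q) ℂ)
    (hfnmeas : ∀ n lam r s, Measurable fun ω => fn n lam ω r s)
    (hstar : ∀ r s, ∀ δ > (0 : ℝ), Tendsto (fun n : ℕ =>
        ℙ {ω : Ω | ∃ v ∈ Finset.Icc 1 (m n),
            δ * ((m n : ℝ) / (n : ℝ) ^ (1 + |d₀ r + d₀ s|)) ≤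
              ‖∑ j ∈ Finset.Icc 1 v,
                (fn n (ffreq n j) ω r s - approxSpec q n A ε (ffreq n j) ω r s)‖})
      atTop (𝓝 0)) :
    -- conclusion: the maximal weighted partial sum is o_P(m^{1/2}/log m)
    ∀ δ > (0 : ℝ), Tendsto (fun n : ℕ =>
        ℙ {ω : Ω | ∃ v ∈ Finset.Icc 1 (m n), ∃ r s,
            δ * (Real.sqrt (m n) / Real.log (m n)) ≤
              ‖∑ j ∈ Finset.Icc 1 v, weightCoef q d₀ n j r s *
                (fn n (ffreq n j) ω r s - approxSpec q n A ε (ffreq n j) ω r s)‖})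
      atTop (𝓝 0) := by
  intro δ hδ
  classical
  have hd1 : ∀ r s : Fin q, |d₀ r + d₀ s| ≤ 1 := by
    intro r s
    have h1 := hd₀ r; have h2 := hd₀ s
    rw [Set.mem_Ioo] at h1 h2
    rw [abs_le]; constructor <;> [linarith; linarith]
  have hds1 : ∀ r s : Fin q, |d₀ r - d₀ s| ≤ 1 := by
    intro r s
    have h1 := hd₀ r; have h2 := hd₀ s
    rw [Set.mem_Ioo] at h1 h2
    rw [abs_le]; constructor <;> [linarith; linarith]
  have hrate := lem_rate α hα m hB4₁ hB4₂
  have hmle := lem_m_le_n α hα m hB4₁ hB4₂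
  have hMtend : Tendsto (fun n => ((m n : ℝ))) atTop atTop :=
    tendsto_natCast_atTop_atTop.comp hB4₁
  -- per-pair convergence with the weights
  have hpair : ∀ r s : Fin q, Tendsto (fun n : ℕ =>
      ℙ {ω : Ω | ∃ v ∈ Finset.Icc 1 (m n),
          δ * (Real.sqrt (m n) / Real.log (m n)) ≤
            ‖∑ j ∈ Finset.Icc 1 v, weightCoef q d₀ n j r s *
              (fn n (ffreq n j) ω r s - approxSpec q n A ε (ffreq n j) ω r s)‖})
      atTop (𝓝 0) := by
    intro r s
    have hstar1 := hstar r s 1 one_pos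
    have h400 : ∀ᶠ n in atTop,
        400 * (Real.sqrt (m n) * Real.log (m n) / n) < δ := by
      have : Tendsto (fun n : ℕ => 400 * (Real.sqrt (m n) * Real.log (m n) / n))
          atTop (𝓝 (400 * 0)) := hrate.const_mul 400
      rw [mul_zero] at this
      exact this.eventually_lt_const hδ
    apply tendsto_of_tendsto_of_tendsto_of_le_of_le' tendsto_const_nhds hstar1
      (Filter.Eventually.of_forall (fun n => zero_le))
    filter_upwards [hB4₁.eventually_ge_atTop 3, hmle, eventually_ge_atTop 4, h400]
      with n hm3 hmn hn4 hlt400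
    apply measure_mono
    intro ω hω
    simp only [Set.mem_setOf_eq] at hω ⊢
    obtain ⟨v, hv, hT⟩ := hω
    by_contra hF
    push_neg at hF
    have hn1 : 1 ≤ n := by omega
    have hm1 : 1 ≤ m n := by omega
    have hNpos : (0:ℝ) < n := by exact_mod_cast (by omega : 0 < n)
    have hMR : (3:ℝ) ≤ (m n : ℝ) := by exact_mod_cast hm3
    have hL1 : 1 ≤ Real.log (m n) := lem_log_ge_one hMR
    have hL0 : (0:ℝ) < Real.log (m n) := by linarith
    have hA0 : (0:ℝ) < Real.sqrt (m n) := Real.sqrt_pos.mpr (by linarith)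
    -- notation
    set e : ℝ := |d₀ r + d₀ s| with he
    set B : ℝ := (m n : ℝ) / (n:ℝ) ^ (1 + e) with hB
    -- the three hypotheses of the Abel bound
    have hS : ∀ j ∈ Finset.Icc 1 (m n),
        ‖∑ i ∈ Finset.Icc 1 j, (fn n (ffreq n i) ω r s
          - approxSpec q n A ε (ffreq n i) ω r s)‖ ≤ B := by
      intro j hj
      have := hF j hj
      rw [one_mul] at this
      exact this.le
    have hW : ∀ j ∈ Finset.Icc 1 (m n),
        ‖weightCoef q d₀ n j r s‖ ≤ 40 * (n:ℝ) ^ e := by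
      intro j hj
      rw [Finset.mem_Icc] at hj
      rw [lem_norm_weightCoef]
      exact lem_ffreq_rpow_le n j hn1 hj.1 (le_trans hj.2 hmn) _ (hd1 r s)
    have hxle : ∀ j : ℕ, 1 ≤ j → j ≤ n →
        ffreq n j ^ (d₀ r + d₀ s) ≤ 40 * (n:ℝ) ^ e :=
      fun j h1 h2 => lem_ffreq_rpow_le n j hn1 h1 h2 _ (hd1 r s)
    have htele : ∑ j ∈ Finset.Icc 1 (m n - 1),
        |ffreq n (j+1) ^ (d₀ r + d₀ s) - ffreq n j ^ (d₀ r + d₀ s)|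
          ≤ 40 * (n:ℝ) ^ e := by
      have hmm : (m n - 1) + 1 = m n := by omega
      rcases le_or_gt 0 (d₀ r + d₀ s) with hdd | hdd
      · rw [lem_tele_mono (fun i => ffreq n i ^ (d₀ r + d₀ s))
            (fun j _ => Real.rpow_le_rpow (lem_ffreq_nonneg n j) (lem_ffreq_mono n j) hdd)
            (m n - 1), hmm]
        have := Real.rpow_nonneg (lem_ffreq_nonneg n 1) (d₀ r + d₀ s)
        have h := hxle (m n) hm1 hmn
        linarith
      · rw [lem_tele_anti (fun i => ffreq n i ^ (d₀ r + d₀ s))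
            (fun j hj => Real.rpow_le_rpow_of_nonpos
              (lem_ffreq_pos n j hn1 hj) (lem_ffreq_mono n j) hdd.le)
            (m n - 1), hmm]
        have := Real.rpow_nonneg (lem_ffreq_nonneg n (m n)) (d₀ r + d₀ s)
        have h := hxle 1 le_rfl (by omega)
        linarith
    have hsum2 : ∑ j ∈ Finset.Icc 1 (m n - 1),
        (2 * Real.pi / n) * ffreq n j ^ (d₀ r + d₀ s) ≤ 252 * (n:ℝ) ^ e := by
      have hcard : (Finset.Icc 1 (m n - 1)).card = m n - 1 := by
        rw [Nat.card_Icc]; omega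
      have hbd : ∀ j ∈ Finset.Icc 1 (m n - 1),
          (2 * Real.pi / n) * ffreq n j ^ (d₀ r + d₀ s)
            ≤ (2 * Real.pi / n) * (40 * (n:ℝ) ^ e) := by
        intro j hj
        rw [Finset.mem_Icc] at hj
        exact mul_le_mul_of_nonneg_left (hxle j hj.1 (by omega)) (by positivity)
      calc ∑ j ∈ Finset.Icc 1 (m n - 1),
            (2 * Real.pi / n) * ffreq n j ^ (d₀ r + d₀ s)
          ≤ ∑ _j ∈ Finset.Icc 1 (m n - 1), (2 * Real.pi / n) * (40 * (n:ℝ) ^ e) :=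
            Finset.sum_le_sum hbd
        _ = ((m n - 1 : ℕ) : ℝ) * ((2 * Real.pi / n) * (40 * (n:ℝ) ^ e)) := by
            rw [Finset.sum_const, hcard, nsmul_eq_mul]
        _ ≤ 252 * (n:ℝ) ^ e := by
            have hc : ((m n - 1 : ℕ) : ℝ) ≤ (n:ℝ) := by
              have : m n - 1 ≤ n := by omega
              exact_mod_cast this
            have hP : (0:ℝ) ≤ (n:ℝ) ^ e := Real.rpow_nonneg hNpos.le e
            have hc0 : (0:ℝ) ≤ ((m n - 1 : ℕ) : ℝ) := by positivity
            have hpi := Real.pi_gt_three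
            have hpi' := Real.pi_lt_d2
            have key : ((m n - 1 : ℕ) : ℝ) * ((2 * Real.pi / n) * (40 * (n:ℝ) ^ e))
                = (80 * Real.pi * (n:ℝ) ^ e) * (((m n - 1 : ℕ) : ℝ) / n) := by
              field_simp
              ring
            rw [key]
            have h1 : (((m n - 1 : ℕ) : ℝ) / n) ≤ 1 := by
              rw [div_le_one hNpos]; exact hc
            calc (80 * Real.pi * (n:ℝ) ^ e) * (((m n - 1 : ℕ) : ℝ) / n)
                ≤ (80 * Real.pi * (n:ℝ) ^ e) * 1 :=
                  mul_le_mul_of_nonneg_left h1 (by positivity)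
              _ = 80 * Real.pi * (n:ℝ) ^ e := by ring
              _ ≤ 252 * (n:ℝ) ^ e := by nlinarith
    have hV : ∑ j ∈ Finset.Icc 1 (m n - 1),
        ‖weightCoef q d₀ n (j+1) r s - weightCoef q d₀ n j r s‖
          ≤ 292 * (n:ℝ) ^ e := by
      calc ∑ j ∈ Finset.Icc 1 (m n - 1),
            ‖weightCoef q d₀ n (j+1) r s - weightCoef q d₀ n j r s‖
          ≤ ∑ j ∈ Finset.Icc 1 (m n - 1),
              (|ffreq n (j+1) ^ (d₀ r + d₀ s) - ffreq n j ^ (d₀ r + d₀ s)|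
                + (2 * Real.pi / n) * ffreq n j ^ (d₀ r + d₀ s)) :=
            Finset.sum_le_sum (fun j _ => lem_weight_step q d₀ n j r s hn4 (hds1 r s))
        _ = (∑ j ∈ Finset.Icc 1 (m n - 1),
              |ffreq n (j+1) ^ (d₀ r + d₀ s) - ffreq n j ^ (d₀ r + d₀ s)|)
            + ∑ j ∈ Finset.Icc 1 (m n - 1),
              (2 * Real.pi / n) * ffreq n j ^ (d₀ r + d₀ s) :=
            Finset.sum_add_distrib
        _ ≤ 40 * (n:ℝ) ^ e + 252 * (n:ℝ) ^ e := add_le_add htele hsum2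
        _ = 292 * (n:ℝ) ^ e := by ring
    have habel := lem_abel_bound (fun j => weightCoef q d₀ n j r s)
      (fun j => fn n (ffreq n j) ω r s - approxSpec q n A ε (ffreq n j) ω r s)
      (m n) B (40 * (n:ℝ) ^ e) (292 * (n:ℝ) ^ e) hS hW hV v hv
    have hWVB : (40 * (n:ℝ) ^ e + 292 * (n:ℝ) ^ e) * B = 332 * ((m n : ℝ) / n) := by
      rw [hB, show (1:ℝ) + e = 1 + e from rfl, Real.rpow_add hNpos, Real.rpow_one]
      have hne : ((n:ℝ)) ^ e ≠ 0 := ne_of_gt (Real.rpow_pos_of_pos hNpos e)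
      field_simp
      ring
    have hlt : 332 * ((m n : ℝ) / n) < δ * (Real.sqrt (m n) / Real.log (m n)) := by
      have hAA : Real.sqrt (m n) * Real.sqrt (m n) = (m n : ℝ) :=
        Real.mul_self_sqrt (by positivity)
      have h332 : 332 * (Real.sqrt (m n) * Real.log (m n) / n) < δ := by
        have hpos : 0 ≤ Real.sqrt (m n) * Real.log (m n) / n := by positivity
        nlinarith
      have hmul := mul_lt_mul_of_pos_right h332
        (show (0:ℝ) < Real.sqrt (m n) / Real.log (m n) by positivity)
      calc 332 * ((m n : ℝ) / n)
          = 332 * (Real.sqrt (m n) * Real.log (m n) / n)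
              * (Real.sqrt (m n) / Real.log (m n)) := by
            have h1 : 332 * (Real.sqrt (m n) * Real.log (m n) / (n:ℝ))
                * (Real.sqrt (m n) / Real.log (m n))
                = 332 * ((Real.sqrt (m n) * Real.sqrt (m n)) / (n:ℝ))
                  * (Real.log (m n) / Real.log (m n)) := by ring
            rw [h1, div_self (ne_of_gt hL0), mul_one, hAA]
        _ < δ * (Real.sqrt (m n) / Real.log (m n)) := hmul
    have : ‖∑ j ∈ Finset.Icc 1 v, weightCoef q d₀ n j r s *
        (fn n (ffreq n j) ω r s - approxSpec q n A ε (ffreq n j) ω r s)‖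
        < δ * (Real.sqrt (m n) / Real.log (m n)) := by
      calc ‖∑ j ∈ Finset.Icc 1 v, weightCoef q d₀ n j r s *
          (fn n (ffreq n j) ω r s - approxSpec q n A ε (ffreq n j) ω r s)‖
          ≤ (40 * (n:ℝ) ^ e + 292 * (n:ℝ) ^ e) * B := habel
        _ = 332 * ((m n : ℝ) / n) := hWVB
        _ < δ * (Real.sqrt (m n) / Real.log (m n)) := hlt
    linarith
  -- assemble over the finitely many pairs (r, s)
  have hbound : ∀ n : ℕ,
      ℙ {ω : Ω | ∃ v ∈ Finset.Icc 1 (m n), ∃ r s,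
          δ * (Real.sqrt (m n) / Real.log (m n)) ≤
            ‖∑ j ∈ Finset.Icc 1 v, weightCoef q d₀ n j r s *
              (fn n (ffreq n j) ω r s - approxSpec q n A ε (ffreq n j) ω r s)‖}
      ≤ ∑ r : Fin q, ∑ s : Fin q,
          ℙ {ω : Ω | ∃ v ∈ Finset.Icc 1 (m n),
            δ * (Real.sqrt (m n) / Real.log (m n)) ≤
              ‖∑ j ∈ Finset.Icc 1 v, weightCoef q d₀ n j r s *
                (fn n (ffreq n j) ω r s - approxSpec q n A ε (ffreq n j) ω r s)‖} := by
    intro n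
    have hsub : {ω : Ω | ∃ v ∈ Finset.Icc 1 (m n), ∃ r s,
        δ * (Real.sqrt (m n) / Real.log (m n)) ≤
          ‖∑ j ∈ Finset.Icc 1 v, weightCoef q d₀ n j r s *
            (fn n (ffreq n j) ω r s - approxSpec q n A ε (ffreq n j) ω r s)‖}
        ⊆ ⋃ r : Fin q, ⋃ s : Fin q, {ω : Ω | ∃ v ∈ Finset.Icc 1 (m n),
            δ * (Real.sqrt (m n) / Real.log (m n)) ≤
              ‖∑ j ∈ Finset.Icc 1 v, weightCoef q d₀ n j r s *
                (fn n (ffreq n j) ω r s - approxSpec q n A ε (ffreq n j) ω r s)‖} := by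
      intro ω hω
      obtain ⟨v, hv, r, s, h⟩ := hω
      exact Set.mem_iUnion.2 ⟨r, Set.mem_iUnion.2 ⟨s, ⟨v, hv, h⟩⟩⟩
    refine le_trans (measure_mono hsub) ?_
    calc ℙ (⋃ r : Fin q, ⋃ s : Fin q, _)
        ≤ ∑' r : Fin q, ℙ (⋃ s : Fin q, _) := measure_iUnion_le _
      _ ≤ ∑' r : Fin q, ∑' s : Fin q, ℙ _ :=
          ENNReal.tsum_le_tsum (fun r => measure_iUnion_le _)
      _ = ∑ r : Fin q, ∑ s : Fin q, ℙ _ := by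
          rw [tsum_fintype]
          exact Finset.sum_congr rfl (fun r _ => tsum_fintype _)
  have hsum : Tendsto (fun n : ℕ => ∑ r : Fin q, ∑ s : Fin q,
      ℙ {ω : Ω | ∃ v ∈ Finset.Icc 1 (m n),
        δ * (Real.sqrt (m n) / Real.log (m n)) ≤
          ‖∑ j ∈ Finset.Icc 1 v, weightCoef q d₀ n j r s *
            (fn n (ffreq n j) ω r s - approxSpec q n A ε (ffreq n j) ω r s)‖})
      atTop (𝓝 0) := by
    have := tendsto_finset_sum (Finset.univ : Finset (Fin q))
      (fun r _ => tendsto_finset_sum (Finset.univ : Finset (Fin q))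
        (fun s _ => hpair r s))
    simpa using this
  exact tendsto_of_tendsto_of_tendsto_of_le_of_le tendsto_const_nhds hsum
    (fun n => zero_le) hbound
end
end

section
/- Vanishing of the weighted frequency average against a consistency rate: Let β ∈ (0,1) and a ∈ [−β, 0]. Let m : ℕ → ℕ satisfy m(n) → ∞ and m(n)/n → 0 as n → ∞. Then n^{−β} · (1/m(n)) · ∑_{j=1}^{m(n)} (2πj/n)^{a} → 0 as n → ∞. -/
open Filter Finset
open scoped Topology Real

lemma sum_rpow_le_aux {a : ℝ} (ha0 : a ≤ 0) (ha1 : -1 < a) (M : ℕ) (hM : 1 ≤ M) :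
    ∑ j ∈ Finset.Icc 1 M, (j : ℝ) ^ a ≤ (1 + 1 / (a + 1)) * (M : ℝ) ^ (a + 1) := by
  have hs : 0 < a + 1 := by linarith
  have hanti : AntitoneOn (fun x : ℝ => x ^ a) (Set.Icc (1 : ℝ) M) := by
    intro x hx y hy hxy
    exact Real.rpow_le_rpow_of_nonpos (lt_of_lt_of_le one_pos hx.1) hxy ha0
  have hint : ∑ i ∈ Finset.Ico 1 M, ((i + 1 : ℕ) : ℝ) ^ a
      ≤ ∫ x in (1 : ℝ)..(M : ℝ), x ^ a := by
    have h := AntitoneOn.sum_le_integral_Ico (f := fun x : ℝ => x ^ a) hM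
      (by simpa using hanti)
    simpa using h
  have hval : ∫ x in (1 : ℝ)..(M : ℝ), x ^ a
      = ((M : ℝ) ^ (a + 1) - 1) / (a + 1) := by
    rw [integral_rpow (Or.inl ha1), Real.one_rpow]
  -- rewrite the sum over Icc 1 M
  have hsplit : ∑ j ∈ Finset.Icc 1 M, (j : ℝ) ^ a
      = (1 : ℝ) ^ a + ∑ i ∈ Finset.Ico 1 M, ((i + 1 : ℕ) : ℝ) ^ a := by
    have h1 : Finset.Icc 1 M = insert 1 ((Finset.Ico 1 M).image (· + 1)) := by
      ext j
      simp only [Finset.mem_Icc, Finset.mem_insert, Finset.mem_image, Finset.mem_Ico]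
      constructor
      · rintro ⟨h1, h2⟩
        rcases eq_or_lt_of_le h1 with h | h
        · exact Or.inl h.symm
        · exact Or.inr ⟨j - 1, by omega, by omega⟩
      · rintro (rfl | ⟨i, ⟨hi1, hi2⟩, rfl⟩) <;> omega
    rw [h1, Finset.sum_insert, Finset.sum_image]
    · norm_num
    · intro x _ y _ h; have h' : x + 1 = y + 1 := h; omega
    · simp only [Finset.mem_image, Finset.mem_Ico]
      rintro ⟨i, ⟨hi1, _⟩, hi⟩; omega
  have hMpow : (1 : ℝ) ≤ (M : ℝ) ^ (a + 1) :=
    Real.one_le_rpow (by exact_mod_cast hM) hs.le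
  rw [hsplit, Real.one_rpow]
  calc 1 + ∑ i ∈ Finset.Ico 1 M, ((i + 1 : ℕ) : ℝ) ^ a
      ≤ 1 + ((M : ℝ) ^ (a + 1) - 1) / (a + 1) := by rw [← hval]; linarith
    _ ≤ (M : ℝ) ^ (a + 1) + ((M : ℝ) ^ (a + 1)) / (a + 1) := by
        have h1 : ((M : ℝ) ^ (a + 1) - 1) / (a + 1)
            = (M : ℝ) ^ (a + 1) / (a + 1) - 1 / (a + 1) := by ring
        have h2 : 0 < 1 / (a + 1) := by positivity
        linarith
    _ = (1 + 1 / (a + 1)) * (M : ℝ) ^ (a + 1) := by ring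

/-- **Vanishing of the weighted frequency average against a consistency rate.**
Let `β ∈ (0,1)` and `a ∈ [−β, 0]`.  If the bandwidth `m(n) → ∞` and `m(n)/n → 0`,
then `n^{−β} · (1/m(n)) · ∑_{j=1}^{m(n)} (2πj/n)^a → 0` as `n → ∞`. -/
theorem weighted_frequency_average_tendsto_zero
    (β a : ℝ) (hβ : β ∈ Set.Ioo (0 : ℝ) 1) (ha : a ∈ Set.Icc (-β) 0)
    (m : ℕ → ℕ) (hm : Tendsto m atTop atTop)
    (hmn : Tendsto (fun n : ℕ => (m n : ℝ) / n) atTop (𝓝 0)) :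
    Tendsto (fun n : ℕ =>
      (n : ℝ) ^ (-β) * ((m n : ℝ))⁻¹ *
        ∑ j ∈ Finset.Icc 1 (m n), (2 * Real.pi * (j : ℝ) / n) ^ a)
      atTop (𝓝 0) := by
  obtain ⟨hβ0, hβ1⟩ := hβ
  obtain ⟨haβ, ha0⟩ := ha
  have ha1 : -1 < a := by linarith
  have hs : 0 < a + 1 := by linarith
  set C : ℝ := (1 + 1 / (a + 1)) * (2 * Real.pi) ^ a with hC
  have hCpos : 0 ≤ C := by positivity
  -- the majorant tends to 0
  have hg : Tendsto (fun n : ℕ => C * (m n : ℝ) ^ (-β)) atTop (𝓝 0) := by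
    have h1 : Tendsto (fun n : ℕ => ((m n : ℝ)) ^ (-β)) atTop (𝓝 0) :=
      (tendsto_rpow_neg_atTop hβ0).comp (tendsto_natCast_atTop_atTop.comp hm)
    simpa using h1.const_mul C
  apply squeeze_zero' ?_ ?_ hg
  · filter_upwards with n
    apply mul_nonneg (mul_nonneg (Real.rpow_nonneg (Nat.cast_nonneg n) _)
      (inv_nonneg.mpr (Nat.cast_nonneg _)))
    apply Finset.sum_nonneg
    intro j _
    apply Real.rpow_nonneg
    positivity
  · have hev1 : ∀ᶠ n : ℕ in atTop, 1 ≤ m n := hm.eventually_ge_atTop 1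
    have hev2 : ∀ᶠ n : ℕ in atTop, (m n : ℝ) / n ≤ 1 :=
      hmn.eventually (eventually_le_nhds one_pos)
    filter_upwards [hev1, hev2, eventually_ge_atTop 1] with n hm1 hmn1 hn1
    have hN : (0 : ℝ) < n := by exact_mod_cast hn1
    have hM : (0 : ℝ) < m n := by exact_mod_cast hm1
    have hMN : (m n : ℝ) ≤ n := by
      have := (div_le_one hN).mp hmn1; exact this
    have h2π : (0 : ℝ) < 2 * Real.pi / n := by positivity
    -- factor the sum
    have hsum : ∑ j ∈ Finset.Icc 1 (m n), (2 * Real.pi * (j : ℝ) / n) ^ a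
        = (2 * Real.pi / n) ^ a * ∑ j ∈ Finset.Icc 1 (m n), (j : ℝ) ^ a := by
      rw [Finset.mul_sum]
      apply Finset.sum_congr rfl
      intro j hj
      rw [← Real.mul_rpow h2π.le (Nat.cast_nonneg j)]
      ring_nf
    have hbound := sum_rpow_le_aux ha0 ha1 (m n) hm1
    have key : (n : ℝ) ^ (-β) * ((m n : ℝ))⁻¹ *
        ((2 * Real.pi / n) ^ a * ((1 + 1 / (a + 1)) * (m n : ℝ) ^ (a + 1)))
        ≤ C * (m n : ℝ) ^ (-β) := by
      have hdiv : (2 * Real.pi / n : ℝ) ^ a = (2 * Real.pi) ^ a * (n : ℝ) ^ (-a) := by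
        rw [Real.div_rpow (by positivity) hN.le, Real.rpow_neg hN.le, div_eq_mul_inv]
      have hMinv : ((m n : ℝ))⁻¹ = (m n : ℝ) ^ (-1 : ℝ) := by
        rw [Real.rpow_neg_one]
      have hNcomb : (n : ℝ) ^ (-β) * (n : ℝ) ^ (-a) = (n : ℝ) ^ (-(β + a)) := by
        rw [← Real.rpow_add hN]; ring_nf
      have hMcomb : (m n : ℝ) ^ (-1 : ℝ) * (m n : ℝ) ^ (a + 1) = (m n : ℝ) ^ a := by
        rw [← Real.rpow_add hM]; ring_nf
      have hNM : (n : ℝ) ^ (-(β + a)) ≤ (m n : ℝ) ^ (-(β + a)) :=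
        Real.rpow_le_rpow_of_nonpos hM hMN (by linarith)
      have hMfin : (m n : ℝ) ^ (-(β + a)) * (m n : ℝ) ^ a = (m n : ℝ) ^ (-β) := by
        rw [← Real.rpow_add hM]; ring_nf
      calc (n : ℝ) ^ (-β) * ((m n : ℝ))⁻¹ *
            ((2 * Real.pi / n) ^ a * ((1 + 1 / (a + 1)) * (m n : ℝ) ^ (a + 1)))
          = C * ((n : ℝ) ^ (-β) * (n : ℝ) ^ (-a) *
              ((m n : ℝ) ^ (-1 : ℝ) * (m n : ℝ) ^ (a + 1))) := by
            rw [hdiv, hMinv, hC]; ring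
        _ = C * ((n : ℝ) ^ (-(β + a)) * (m n : ℝ) ^ a) := by rw [hNcomb, hMcomb]
        _ ≤ C * ((m n : ℝ) ^ (-(β + a)) * (m n : ℝ) ^ a) := by
            apply mul_le_mul_of_nonneg_left ?_ hCpos
            exact mul_le_mul_of_nonneg_right hNM (Real.rpow_nonneg hM.le a)
        _ = C * (m n : ℝ) ^ (-β) := by rw [hMfin]
    refine le_trans ?_ key
    rw [hsum]
    apply mul_le_mul_of_nonneg_left ?_
      (mul_nonneg (Real.rpow_nonneg hN.le _) (inv_nonneg.mpr hM.le))
    exact mul_le_mul_of_nonneg_left hbound (Real.rpow_nonneg h2π.le a)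
end
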